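/- arXiv:2310.14328 — 9 statements merged into one kernel-verified Lean document; each statement's English description precedes it below -/
import Mathlib

section
/- Let ι be a finite nonempty index set, let λ : ι → ℝ satisfy λ i ≥ 0 for all i and ∑ᵢ λ i = 1, and let r : ι → ℝ satisfy 0 < a ≤ r i ≤ b for all i (for real numbers a, b). Set Z := ∑ⱼ λ j · r j and λ' i := λ i · r i / Z. Then Z > 0, ∑ᵢ λ' i = 1, and the total variation distance satisfies (1/2)·∑ᵢ |λ i − λ' i| ≤ 1 − a/b. -/
/-!
Write `Z = ∑ⱼ wⱼ rⱼ`, so that `a ≤ Z ≤ b`. Then `wᵢ - wᵢ rᵢ / Z = wᵢ (Z - rᵢ) / Z`, and the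
deviations `xᵢ = Z - rᵢ` have `w`-mean zero and are bounded above by `Z - a`. For such a
mean-zero family `∑ wᵢ |xᵢ| = 2 ∑ wᵢ xᵢ⁺ ≤ 2 (Z - a)`, so the total variation distance is at
most `(Z - a) / Z = 1 - a / Z ≤ 1 - a / b`.
-/

open Finset

namespace Finset

variable {ι : Type*} {s : Finset ι} {w r x : ι → ℝ} {a b c : ℝ}

theorem le_sum_mul_of_forall_le (hw0 : ∀ i ∈ s, 0 ≤ w i) (hw1 : ∑ i ∈ s, w i = 1)
    (hra : ∀ i ∈ s, a ≤ r i) : a ≤ ∑ i ∈ s, w i * r i :=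
  calc a = ∑ i ∈ s, w i * a := by rw [← sum_mul, hw1, one_mul]
    _ ≤ ∑ i ∈ s, w i * r i := sum_le_sum fun i hi => mul_le_mul_of_nonneg_left (hra i hi) (hw0 i hi)

theorem sum_mul_le_of_forall_le (hw0 : ∀ i ∈ s, 0 ≤ w i) (hw1 : ∑ i ∈ s, w i = 1)
    (hrb : ∀ i ∈ s, r i ≤ b) : ∑ i ∈ s, w i * r i ≤ b :=
  calc ∑ i ∈ s, w i * r i ≤ ∑ i ∈ s, w i * b :=
        sum_le_sum fun i hi => mul_le_mul_of_nonneg_left (hrb i hi) (hw0 i hi)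
    _ = b := by rw [← sum_mul, hw1, one_mul]

/-- Since `|x| ≤ 2c - x` for `x ≤ c` and `0 ≤ c`, the mean-zero condition removes the `-x`. -/
theorem sum_mul_abs_le_of_sum_mul_eq_zero (hw0 : ∀ i ∈ s, 0 ≤ w i)
    (hx0 : ∑ i ∈ s, w i * x i = 0) (hc : 0 ≤ c) (hxc : ∀ i ∈ s, x i ≤ c) :
    ∑ i ∈ s, w i * |x i| ≤ 2 * c * ∑ i ∈ s, w i :=
  calc ∑ i ∈ s, w i * |x i| ≤ ∑ i ∈ s, (2 * c * w i - w i * x i) := by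
        refine sum_le_sum fun i hi => ?_
        have habs : |x i| ≤ 2 * c - x i := abs_le'.mpr ⟨by linarith [hxc i hi], by linarith⟩
        nlinarith [mul_le_mul_of_nonneg_left habs (hw0 i hi)]
    _ = 2 * c * ∑ i ∈ s, w i := by rw [sum_sub_distrib, hx0, sub_zero, mul_sum]

theorem half_sum_abs_sub_mul_div_le (hw0 : ∀ i ∈ s, 0 ≤ w i) (hw1 : ∑ i ∈ s, w i = 1)
    (ha : 0 < a) (hra : ∀ i ∈ s, a ≤ r i) :
    (1 / 2) * ∑ i ∈ s, |w i - w i * r i / ∑ j ∈ s, w j * r j| ≤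
      1 - a / ∑ j ∈ s, w j * r j := by
  set Z := ∑ j ∈ s, w j * r j with hZ
  have haZ : a ≤ Z := le_sum_mul_of_forall_le hw0 hw1 hra
  have hZ0 : 0 < Z := ha.trans_le haZ
  have hdev : ∀ i ∈ s, |w i - w i * r i / Z| = w i * |Z - r i| / Z := fun i hi => by
    rw [show w i - w i * r i / Z = w i * (Z - r i) / Z by field_simp, abs_div, abs_mul,
      abs_of_nonneg (hw0 i hi), abs_of_pos hZ0]
  have hmean : ∑ i ∈ s, w i * (Z - r i) = 0 := by
    simp only [mul_sub, sum_sub_distrib, ← sum_mul, hw1, one_mul, ← hZ, sub_self]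
  have hbound : ∑ i ∈ s, w i * |Z - r i| ≤ 2 * (Z - a) := by
    simpa [hw1] using sum_mul_abs_le_of_sum_mul_eq_zero hw0 hmean (sub_nonneg.mpr haZ)
      fun i hi => sub_le_sub_left (hra i hi) Z
  calc (1 / 2) * ∑ i ∈ s, |w i - w i * r i / Z|
      = (1 / 2) * (∑ i ∈ s, w i * |Z - r i|) / Z := by
        rw [sum_congr rfl hdev, ← sum_div, mul_div_assoc]
    _ ≤ (1 / 2) * (2 * (Z - a)) / Z := by gcongr
    _ = 1 - a / Z := by field_simp

end Finset

theorem stmt_2_general {ι : Type*} [Fintype ι]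
    (w r : ι → ℝ) (a b : ℝ)
    (hw0 : ∀ i, 0 ≤ w i) (hw1 : ∑ i, w i = 1)
    (ha : 0 < a) (hra : ∀ i, a ≤ r i) (hrb : ∀ i, r i ≤ b) :
    0 < (∑ j, w j * r j) ∧
    (∑ i, w i * r i / (∑ j, w j * r j)) = 1 ∧
    (1 / 2) * ∑ i, |w i - w i * r i / (∑ j, w j * r j)| ≤ 1 - a / b := by
  have hZ0 : 0 < ∑ j, w j * r j :=
    ha.trans_le (le_sum_mul_of_forall_le (fun i _ => hw0 i) hw1 fun i _ => hra i)
  have hZb : ∑ j, w j * r j ≤ b := sum_mul_le_of_forall_le (fun i _ => hw0 i) hw1 fun i _ => hrb i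
  refine ⟨hZ0, by rw [← sum_div, div_self hZ0.ne'], ?_⟩
  calc (1 / 2) * ∑ i, |w i - w i * r i / ∑ j, w j * r j| ≤ 1 - a / ∑ j, w j * r j :=
        half_sum_abs_sub_mul_div_le (fun i _ => hw0 i) hw1 ha fun i _ => hra i
    _ ≤ 1 - a / b := sub_le_sub_left (div_le_div_of_nonneg_left ha.le hZ0 hZb) 1

theorem stmt_2 {ι : Type*} [Fintype ι] [Nonempty ι]
    (w r : ι → ℝ) (a b : ℝ)
    (hw0 : ∀ i, 0 ≤ w i) (hw1 : ∑ i, w i = 1)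
    (ha : 0 < a) (hra : ∀ i, a ≤ r i) (hrb : ∀ i, r i ≤ b) :
    0 < (∑ j, w j * r j) ∧
    (∑ i, w i * r i / (∑ j, w j * r j)) = 1 ∧
    (1 / 2) * ∑ i, |w i - w i * r i / (∑ j, w j * r j)| ≤ 1 - a / b :=
  stmt_2_general w r a b hw0 hw1 ha hra hrb
end

section
/- Let ι be a finite nonempty index set, let λ : ι → ℝ satisfy λ i ≥ 0 and ∑ᵢ λ i = 1, let η ∈ [0, 1/2), and let p : ι → ℝ satisfy 1/2 ≤ p i ≤ 1/2 + η for all i. Let T, t be natural numbers with t ≤ 2T. Set Z := ∑ⱼ λ j · (p j)^t · (1 − p j)^{2T − t} and λ' i := λ i · (p i)^t · (1 − p i)^{2T − t} / Z. Then Z > 0 and (1/2)·∑ᵢ |λ i − λ' i| ≤ 1 − (1 − 4η²)^T · ((1 − 2η)/(1 + 2η))^{|t − T|}. -/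
/-!
Let `f x = x ^ t * (1 - x) ^ (2T - t)` and let `c` be the constant
`(1 - 4η²)^T ((1 - 2η)/(1 + 2η))^|t - T|`. For all `p, q ∈ [1/2, 1/2 + η]` we have
`c * f q ≤ f p`, so the reweighted distribution `λ'` dominates `c • λ`; and a probability vector
dominating `c • λ` is within total variation distance `1 - c` of `λ`. For the bound on `f`, write
`f x = (x (1 - x))^s * (y²)^d` with `d = |t - T|`, `s = T - d` and `y = x` or `y = 1 - x`, and
compare factor by factor.
-/

open Finset

section Reweighting

variable {ι : Type*} [Fintype ι] {w : ι → ℝ}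

theorem half_sum_abs_sub_le_of_mul_le {w' : ι → ℝ} {c : ℝ} (hw0 : ∀ i, 0 ≤ w i)
    (hw : ∑ i, w i = 1) (hw' : ∑ i, w' i = 1) (hc : ∀ i, c * w i ≤ w' i) :
    (1 / 2) * ∑ i, |w i - w' i| ≤ 1 - c := by
  have hc1 : c ≤ 1 := by
    calc c = ∑ i, c * w i := by rw [← mul_sum, hw, mul_one]
      _ ≤ ∑ i, w' i := sum_le_sum fun i _ => hc i
      _ = 1 := hw'
  -- `w - w' = (1 - c) w - (w' - c w)` is a difference of two nonnegative vectors of mass `1 - c`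
  have hterm : ∀ i, |w i - w' i| ≤ w i + w' i - 2 * (c * w i) := fun i =>
    abs_le.mpr ⟨by nlinarith [hw0 i, hc i], by linarith [hc i]⟩
  have hsum : ∑ i, |w i - w' i| ≤ 2 * (1 - c) := by
    calc ∑ i, |w i - w' i| ≤ ∑ i, (w i + w' i - 2 * (c * w i)) := sum_le_sum fun i _ => hterm i
      _ = 2 * (1 - c) := by
        rw [sum_sub_distrib, sum_add_distrib, ← mul_sum, ← mul_sum, hw, hw']; ring
  linarith

variable {g : ι → ℝ}

theorem sum_mul_pos_of_sum_eq_one (hw0 : ∀ i, 0 ≤ w i) (hw : ∑ i, w i = 1)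
    (hg : ∀ i, 0 < g i) : 0 < ∑ i, w i * g i := by
  obtain ⟨i, -, hi⟩ := exists_ne_zero_of_sum_ne_zero (hw ▸ one_ne_zero : ∑ i, w i ≠ 0)
  exact sum_pos' (fun j _ => mul_nonneg (hw0 j) (hg j).le)
    ⟨i, mem_univ i, mul_pos ((hw0 i).lt_of_ne' hi) (hg i)⟩

theorem mul_le_mul_div_sum_mul {c : ℝ} (hw0 : ∀ i, 0 ≤ w i) (hw : ∑ i, w i = 1)
    (hZ : 0 < ∑ j, w j * g j) {i : ι} (hc : ∀ j, c * g j ≤ g i) :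
    c * w i ≤ w i * g i / ∑ j, w j * g j := by
  have hcZ : c * ∑ j, w j * g j ≤ g i := by
    calc c * ∑ j, w j * g j = ∑ j, w j * (c * g j) := by
          rw [mul_sum]; exact sum_congr rfl fun j _ => by ring
      _ ≤ ∑ j, w j * g i := sum_le_sum fun j _ => mul_le_mul_of_nonneg_left (hc j) (hw0 j)
      _ = g i := by rw [← sum_mul, hw, one_mul]
  rw [le_div_iff₀ hZ]
  nlinarith [hw0 i]

end Reweighting

theorem pow_mul_pow_mul_le {a b x y x' y' : ℝ} (m n : ℕ) (ha : 0 ≤ a) (hb : 0 ≤ b)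
    (hx' : 0 ≤ x') (hy' : 0 ≤ y') (hx : a * x' ≤ x) (hy : b * y' ≤ y) :
    a ^ m * b ^ n * (x' ^ m * y' ^ n) ≤ x ^ m * y ^ n := by
  calc a ^ m * b ^ n * (x' ^ m * y' ^ n) = (a * x') ^ m * (b * y') ^ n := by ring
    _ ≤ x ^ m * y ^ n :=
      mul_le_mul (pow_le_pow_left₀ (mul_nonneg ha hx') hx m)
        (pow_le_pow_left₀ (mul_nonneg hb hy') hy n) (by positivity)
        (pow_nonneg ((mul_nonneg ha hx').trans hx) m)

section BinomialWeight

variable {η p q : ℝ}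

theorem one_sub_four_mul_sq_mul_le (hη : η ∈ Set.Ico (0 : ℝ) (1 / 2))
    (hp : p ∈ Set.Icc (1 / 2) (1 / 2 + η)) :
    (1 - 4 * η ^ 2) * (q * (1 - q)) ≤ p * (1 - p) := by
  obtain ⟨hη0, hη1⟩ := hη; obtain ⟨hp1, hp2⟩ := hp
  have hq4 : q * (1 - q) ≤ 1 / 4 := by nlinarith [sq_nonneg (q - 1 / 2)]
  calc (1 - 4 * η ^ 2) * (q * (1 - q)) ≤ (1 - 4 * η ^ 2) * (1 / 4) :=
        mul_le_mul_of_nonneg_left hq4 (by nlinarith)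
    _ = 1 / 4 - η ^ 2 := by ring
    _ ≤ 1 / 4 - (p - 1 / 2) ^ 2 := by gcongr; linarith
    _ = p * (1 - p) := by ring

theorem one_sub_two_mul_sq_mul_le_one_sub (hη : η ∈ Set.Ico (0 : ℝ) (1 / 2))
    (hp : p ≤ 1 / 2 + η) (hq : q ∈ Set.Icc (1 / 2) (1 / 2 + η)) :
    (1 - 2 * η) ^ 2 * (1 - q) ^ 2 ≤ (1 - p) ^ 2 := by
  obtain ⟨hη0, hη1⟩ := hη; obtain ⟨hq1, hq2⟩ := hq
  rw [← mul_pow]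
  exact pow_le_pow_left₀ (by nlinarith) (by nlinarith) 2

theorem one_sub_two_mul_sq_mul_le (hη : η ∈ Set.Ico (0 : ℝ) (1 / 2)) (hp : 1 / 2 ≤ p)
    (hq : q ∈ Set.Icc 0 (1 / 2 + η)) :
    (1 - 2 * η) ^ 2 * q ^ 2 ≤ p ^ 2 := by
  obtain ⟨hη0, hη1⟩ := hη; obtain ⟨hq1, hq2⟩ := hq
  rw [← mul_pow]
  exact pow_le_pow_left₀ (by nlinarith) (by nlinarith) 2

theorem one_sub_four_mul_sq_pow_add_mul_div_pow_eq (hη : 0 ≤ η) {s d : ℕ} :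
    (1 - 4 * η ^ 2) ^ (s + d) * ((1 - 2 * η) / (1 + 2 * η)) ^ d =
      (1 - 4 * η ^ 2) ^ s * ((1 - 2 * η) ^ 2) ^ d := by
  have h : 1 + 2 * η ≠ 0 := by linarith
  rw [pow_add, mul_assoc, ← mul_pow]
  congr 2
  rw [mul_div_assoc', div_eq_iff h]
  ring

theorem mul_pow_mul_one_sub_pow_le (hη : η ∈ Set.Ico (0 : ℝ) (1 / 2))
    (hp : p ∈ Set.Icc (1 / 2) (1 / 2 + η)) (hq : q ∈ Set.Icc (1 / 2) (1 / 2 + η))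
    {T t : ℕ} (ht : t ≤ 2 * T) :
    (1 - 4 * η ^ 2) ^ T * ((1 - 2 * η) / (1 + 2 * η)) ^ Nat.dist t T *
      (q ^ t * (1 - q) ^ (2 * T - t)) ≤ p ^ t * (1 - p) ^ (2 * T - t) := by
  have hq0 : 0 ≤ q := by linarith [hq.1]
  have hq1 : 0 ≤ 1 - q := by linarith [hq.2, hη.2]
  have hη4 : 0 ≤ 1 - 4 * η ^ 2 := by nlinarith [hη.1, hη.2]
  have hpq := one_sub_four_mul_sq_mul_le (q := q) hη hp
  rcases le_total T t with hTt | htT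
  · obtain ⟨d, rfl⟩ := Nat.exists_eq_add_of_le hTt
    obtain ⟨s, rfl⟩ := Nat.exists_eq_add_of_le' (show d ≤ T by omega)
    have hsplit : ∀ x : ℝ, x ^ (s + d + d) * (1 - x) ^ (2 * (s + d) - (s + d + d)) =
        (x * (1 - x)) ^ s * (x ^ 2) ^ d := fun x => by
      rw [show 2 * (s + d) - (s + d + d) = s by omega, pow_add, ← pow_mul, mul_pow]; ring
    rw [show Nat.dist (s + d + d) (s + d) = d by simp [Nat.dist], one_sub_four_mul_sq_pow_add_mul_div_pow_eq hη.1,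
      hsplit, hsplit]
    exact pow_mul_pow_mul_le s d hη4 (sq_nonneg _) (by positivity) (sq_nonneg _) hpq
      (one_sub_two_mul_sq_mul_le hη hp.1 ⟨hq0, hq.2⟩)
  · obtain ⟨d, rfl⟩ := Nat.exists_eq_add_of_le htT
    have hsplit : ∀ x : ℝ, x ^ t * (1 - x) ^ (2 * (t + d) - t) =
        (x * (1 - x)) ^ t * ((1 - x) ^ 2) ^ d := fun x => by
      rw [show 2 * (t + d) - t = t + 2 * d by omega, pow_add, pow_mul, mul_pow]; ring
    rw [show Nat.dist t (t + d) = d by simp [Nat.dist], one_sub_four_mul_sq_pow_add_mul_div_pow_eq hη.1,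
      hsplit, hsplit]
    exact pow_mul_pow_mul_le t d hη4 (sq_nonneg _) (by positivity) (sq_nonneg _) hpq
      (one_sub_two_mul_sq_mul_le_one_sub hη hp.2 hq)

end BinomialWeight

theorem stmt_3_general {ι : Type*} [Fintype ι]
    (w p : ι → ℝ) (η : ℝ) (T t : ℕ)
    (hw0 : ∀ i, 0 ≤ w i) (hw1 : ∑ i, w i = 1)
    (hη : η ∈ Set.Ico (0 : ℝ) (1 / 2))
    (hp1 : ∀ i, 1 / 2 ≤ p i) (hp2 : ∀ i, p i ≤ 1 / 2 + η)
    (ht : t ≤ 2 * T) :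
    0 < (∑ j, w j * (p j) ^ t * (1 - p j) ^ (2 * T - t)) ∧
    (1 / 2) * ∑ i, |w i - w i * (p i) ^ t * (1 - p i) ^ (2 * T - t) /
        (∑ j, w j * (p j) ^ t * (1 - p j) ^ (2 * T - t))| ≤
      1 - (1 - 4 * η ^ 2) ^ T * ((1 - 2 * η) / (1 + 2 * η)) ^ (Nat.dist t T) := by
  have hp : ∀ i, p i ∈ Set.Icc (1 / 2) (1 / 2 + η) := fun i => ⟨hp1 i, hp2 i⟩
  have hg : ∀ i, 0 < p i ^ t * (1 - p i) ^ (2 * T - t) := fun i => by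
    have : p i < 1 := by linarith [hp2 i, hη.2]
    have : 0 < p i := by linarith [hp1 i]
    positivity
  simp only [mul_assoc]
  have hZ := sum_mul_pos_of_sum_eq_one hw0 hw1 hg
  refine ⟨hZ, half_sum_abs_sub_le_of_mul_le hw0 hw1 ?_ fun i => ?_⟩
  · rw [← sum_div, div_self hZ.ne']
  · simpa only [mul_assoc] using
      mul_le_mul_div_sum_mul hw0 hw1 hZ fun j => mul_pow_mul_one_sub_pow_le hη (hp i) (hp j) ht

theorem stmt_3 {ι : Type*} [Fintype ι] [Nonempty ι]
    (w p : ι → ℝ) (η : ℝ) (T t : ℕ)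
    (hw0 : ∀ i, 0 ≤ w i) (hw1 : ∑ i, w i = 1)
    (hη : η ∈ Set.Ico (0 : ℝ) (1 / 2))
    (hp1 : ∀ i, 1 / 2 ≤ p i) (hp2 : ∀ i, p i ≤ 1 / 2 + η)
    (ht : t ≤ 2 * T) :
    0 < (∑ j, w j * (p j) ^ t * (1 - p j) ^ (2 * T - t)) ∧
    (1 / 2) * ∑ i, |w i - w i * (p i) ^ t * (1 - p i) ^ (2 * T - t) /
        (∑ j, w j * (p j) ^ t * (1 - p j) ^ (2 * T - t))| ≤
      1 - (1 - 4 * η ^ 2) ^ T * ((1 - 2 * η) / (1 + 2 * η)) ^ (Nat.dist t T) :=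
  stmt_3_general w p η T t hw0 hw1 hη hp1 hp2 ht
end

section
/- Let η ∈ [0, 1/2) and let p be a real number with 1/2 ≤ p ≤ 1/2 + η. Let T, t be natural numbers with t ≤ 2T. Then (1/4 − η²)^T · ((1 − 2η)/(1 + 2η))^{|t − T|} ≤ p^t · (1 − p)^{2T − t} ≤ (1/4)^T · ((1 + 2η)/(1 − 2η))^{|t − T|}. -/
lemma aux_lower (η p r : ℝ) (hη0 : 0 ≤ η) (hη2 : η < 1/2)
    (hp1 : 1/2 ≤ p) (hp2 : p ≤ 1/2 + η) (hr1 : (1-2*η)/2 ≤ r) (m d : ℕ) :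
    (1/4 - η^2)^(m+d) * ((1-2*η)/(1+2*η))^d ≤ (p*(1-p))^m * r^(2*d) := by
  have h1 : (0:ℝ) < 1 - 2*η := by linarith
  have h2 : (0:ℝ) < 1 + 2*η := by linarith
  have key : (1/4 - η^2)^(m+d) * ((1-2*η)/(1+2*η))^d
      = (1/4-η^2)^m * ((1-2*η)/2)^(2*d) := by
    rw [pow_add, pow_mul, mul_assoc, ← mul_pow]
    congr 2
    field_simp
    ring
  have hpq := mul_nonneg (by linarith : (0:ℝ) ≤ p) (by linarith : (0:ℝ) ≤ 1-p)
  rw [key]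
  gcongr <;> nlinarith

lemma aux_upper (η p r : ℝ) (hη0 : 0 ≤ η) (hη2 : η < 1/2)
    (hp1 : 1/2 ≤ p) (hp2 : p ≤ 1/2 + η) (hr0 : 0 ≤ r) (hr2 : r ≤ (1+2*η)/2) (m d : ℕ) :
    (p*(1-p))^m * r^(2*d) ≤ (1/4)^(m+d) * ((1+2*η)/(1-2*η))^d := by
  have h1 : (0:ℝ) < 1 - 2*η := by linarith
  have h2 : (0:ℝ) < 1 + 2*η := by linarith
  have hpq : (0:ℝ) ≤ p * (1-p) := by nlinarith
  have step1 : (p*(1-p))^m * r^(2*d) ≤ (1/4)^m * ((1+2*η)/2)^(2*d) := by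
    gcongr <;> nlinarith
  refine step1.trans ?_
  rw [pow_add, mul_assoc, pow_mul, ← mul_pow]
  have hkey : ((1+2*η)/2)^2 ≤ 1/4 * ((1+2*η)/(1-2*η)) := by
    rw [show (1:ℝ)/4 * ((1+2*η)/(1-2*η)) = (1+2*η)/(4*(1-2*η)) by
        field_simp,
      show ((1+2*η)/2)^2 = (1+2*η)^2/4 by ring,
      div_le_div_iff₀ (by norm_num) (by linarith)]
    nlinarith [mul_nonneg (mul_nonneg h2.le hη0) hη0]
  gcongr <;> first | exact hkey | positivity | norm_num

theorem stmt_4 (η p : ℝ) (hη : η ∈ Set.Ico (0 : ℝ) (1 / 2))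
    (hp1 : 1 / 2 ≤ p) (hp2 : p ≤ 1 / 2 + η)
    (T t : ℕ) (ht : t ≤ 2 * T) :
    (1 / 4 - η ^ 2) ^ T * ((1 - 2 * η) / (1 + 2 * η)) ^ (Nat.dist t T) ≤
        p ^ t * (1 - p) ^ (2 * T - t) ∧
    p ^ t * (1 - p) ^ (2 * T - t) ≤
        (1 / 4) ^ T * ((1 + 2 * η) / (1 - 2 * η)) ^ (Nat.dist t T) := by
  obtain ⟨hη0, hη2⟩ := hη
  have hp0 : (0:ℝ) ≤ p := by linarith
  have hq0 : (0:ℝ) ≤ 1 - p := by linarith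
  rcases le_total T t with hTt | htT
  · -- t ≥ T
    obtain ⟨m, hm1, hm2⟩ : ∃ m, T = m + (t - T) ∧ t = m + 2 * (t - T) :=
      ⟨2 * T - t, by omega, by omega⟩
    have hdist : Nat.dist t T = t - T := by
      simp [Nat.dist]; omega
    set d := t - T
    have hexp : 2 * T - t = m := by omega
    have hfact : p ^ t * (1 - p) ^ (2 * T - t) = (p*(1-p))^m * p^(2*d) := by
      rw [hexp, hm2, pow_add, mul_pow]; ring
    rw [hdist, hfact, hm1]
    exact ⟨aux_lower η p p hη0 hη2 hp1 hp2 (by linarith) m d,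
      aux_upper η p p hη0 hη2 hp1 hp2 hp0 (by linarith) m d⟩
  · -- t ≤ T
    obtain ⟨m, hm1, hm2⟩ : ∃ m, T = m + (T - t) ∧ 2 * T - t = m + 2 * (T - t) :=
      ⟨t, by omega, by omega⟩
    have hdist : Nat.dist t T = T - t := by
      simp [Nat.dist]; omega
    set d := T - t
    have hexp : t = m := by omega
    have hfact : p ^ t * (1 - p) ^ (2 * T - t) = (p*(1-p))^m * (1-p)^(2*d) := by
      rw [hm2, hexp, pow_add, mul_pow]; ring
    rw [hdist, hfact, hm1]
    exact ⟨aux_lower η p (1-p) hη0 hη2 hp1 hp2 (by linarith) m d,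
      aux_upper η p (1-p) hη0 hη2 hp1 hp2 hq0 (by linarith) m d⟩
end

section
/- Let q, N, m be natural numbers and work over ZMod q. Let B, E₁, E₂, G : Matrix (Fin N) (Fin m) (ZMod q), let R₁, R₂, H : Matrix (Fin m) (Fin m) (ZMod q), and let μ₁, μ₂ : ZMod q. Define ct₁ := B * R₁ + E₁ + μ₁ • G and ct₂ := B * R₂ + E₂ + μ₂ • G, and assume G * H = ct₂ (H plays the role of G⁻¹(ct₂)). Then G − ct₁ * H = B * R + E + (1 − μ₁ · μ₂) • G, where R := −(R₁ * H + μ₁ • R₂) and E := −(E₁ * H + μ₁ • E₂). -/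
theorem stmt_6 (q N m : ℕ)
    (B E₁ E₂ G : Matrix (Fin N) (Fin m) (ZMod q))
    (R₁ R₂ H : Matrix (Fin m) (Fin m) (ZMod q))
    (μ₁ μ₂ : ZMod q)
    (ct₁ ct₂ : Matrix (Fin N) (Fin m) (ZMod q))
    (hct₁ : ct₁ = B * R₁ + E₁ + μ₁ • G)
    (hct₂ : ct₂ = B * R₂ + E₂ + μ₂ • G)
    (hH : G * H = ct₂) :
    G - ct₁ * H =
      B * (-(R₁ * H + μ₁ • R₂)) + (-(E₁ * H + μ₁ • E₂)) + (1 - μ₁ * μ₂) • G := by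
  subst hct₁ hct₂
  have h : μ₁ • G * H = μ₁ • (B * R₂ + E₂ + μ₂ • G) := by
    rw [Matrix.smul_mul, hH]
  simp only [Matrix.add_mul, h]
  simp only [smul_add, smul_smul, sub_smul, one_smul, mul_smul_comm, Matrix.mul_add,
    Matrix.mul_neg, Matrix.mul_smul, Matrix.mul_assoc]
  abel
end

section
/- Let q, n, m, k be natural numbers and work over ZMod q. For each i ∈ Fin k let Aᵢ : Matrix (Fin n) (Fin m) (ZMod q), let sᵢ, xᵢ : Fin n → ZMod q, let eᵢ, eᵢ' : Fin m → ZMod q, and let bᵢ : ZMod q (in the scheme bᵢ ∈ {0,1}); set yᵢ := xᵢ ᵥ* Aᵢ + eᵢ' + bᵢ • (sᵢ ᵥ* Aᵢ). Let N := k·(n+1) + 1 and let M : Matrix (Fin N) (Fin m) (ZMod q) be the matrix whose rows are, for each i in order, the single row sᵢ ᵥ* Aᵢ + eᵢ followed by the n rows of Aᵢ, and whose last row is ∑ᵢ yᵢ. Let sk : Fin N → ZMod q be the vector consisting, block by block, of the entry bᵢ followed by the n entries of xᵢ, with last entry −1. Let R : Matrix (Fin m) (Fin m) (ZMod q), let e''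 : Fin m → ZMod q, let E : Matrix (Fin N) (Fin m) (ZMod q) have all rows zero except the last row equal to e'', let G : Matrix (Fin N) (Fin m) (ZMod q), let μ, τ : ZMod q, and set ct := M * R + E + μ • G. Let v : Fin N → ZMod q be zero in all coordinates except the last, which equals τ, and let w : Fin m → ZMod q satisfy G *ᵥ w = v. Then: (a) sk ᵥ* M = ∑ᵢ (bᵢ • eᵢ − eᵢ'); and (b) (−sk) ⬝ᵥ (ct *ᵥ w) = (∑ᵢ (eᵢ' − bᵢ • eᵢ)) ⬝ᵥ (R *ᵥ w) + e'' ⬝ᵥ w + μ · τ. -/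
open Matrix

/-- The index of the `i`-th block (header if `idx % (n+1) = 0`, body row otherwise)
among the first `k*(n+1)` rows. -/
def blockVec {q n k : ℕ} (hdr : Fin k → ZMod q) (body : Fin k → Fin n → ZMod q)
    (last : ZMod q) : Fin (k * (n + 1) + 1) → ZMod q := fun idx =>
  if h : idx.val < k * (n + 1) then
    let i : Fin k := ⟨idx.val / (n + 1), by
      rw [Nat.div_lt_iff_lt_mul (Nat.succ_pos n)]; exact h⟩
    if hr : idx.val % (n + 1) = 0 then hdr i
    else body i ⟨idx.val % (n + 1) - 1, by
      have hlt : idx.val % (n + 1) < n + 1 := Nat.mod_lt _ (Nat.succ_pos n)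
      omega⟩
  else last

/-- The matrix whose rows are, for each `i : Fin k` in order, the row `hdr i`
followed by the `n` rows of `body i`, and whose last row is `last`. -/
def blockMat {q n m k : ℕ} (hdr : Fin k → Fin m → ZMod q)
    (body : Fin k → Matrix (Fin n) (Fin m) (ZMod q))
    (last : Fin m → ZMod q) : Matrix (Fin (k * (n + 1) + 1)) (Fin m) (ZMod q) :=
  Matrix.of fun idx j =>
    blockVec (fun i => hdr i j) (fun i r => body i r j) (last j) idx

lemma blockVec_mul {q n k : ℕ} (h1 h2 : Fin k → ZMod q) (b1 b2 : Fin k → Fin n → ZMod q)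
    (l1 l2 : ZMod q) (idx : Fin (k * (n + 1) + 1)) :
    blockVec h1 b1 l1 idx * blockVec h2 b2 l2 idx =
      blockVec (fun i => h1 i * h2 i) (fun i r => b1 i r * b2 i r) (l1 * l2) idx := by
  unfold blockVec
  split_ifs <;> rfl

lemma blockVec_last {q n k : ℕ} (hdr : Fin k → ZMod q) (body : Fin k → Fin n → ZMod q)
    (l : ZMod q) : blockVec hdr body l (Fin.last (k * (n + 1))) = l := by
  simp [blockVec]

lemma sum_blockVec {q n k : ℕ} (hdr : Fin k → ZMod q) (body : Fin k → Fin n → ZMod q)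
    (l : ZMod q) :
    ∑ idx, blockVec hdr body l idx = (∑ i, (hdr i + ∑ r, body i r)) + l := by
  rw [Fin.sum_univ_castSucc, blockVec_last]
  congr 1
  rw [← Equiv.sum_comp (finProdFinEquiv (m := k) (n := n + 1))
      (fun p => blockVec hdr body l p.castSucc), Fintype.sum_prod_type]
  refine Finset.sum_congr rfl fun i _ => ?_
  rw [Fin.sum_univ_succ]
  congr 1
  · have : ((finProdFinEquiv (i, (0 : Fin (n+1)))).castSucc : Fin (k*(n+1)+1)).val
        = (n+1) * i.val := by
      simp [finProdFinEquiv]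
    rw [show (finProdFinEquiv (i, (0 : Fin (n+1)))).castSucc = _ from rfl]
    unfold blockVec
    have hv : ((finProdFinEquiv (i, (0 : Fin (n+1)))).castSucc : Fin (k*(n+1)+1)).val
        = (n+1) * i.val := this
    rw [dif_pos (by simp only [Fin.coe_castSucc]; exact (finProdFinEquiv _).isLt)]
    · rw [dif_pos]
      · congr 1
        apply Fin.ext
        simp [hv, Nat.mul_div_cancel_left _ (Nat.succ_pos n)]
      · simp [hv]
  · refine Finset.sum_congr rfl fun j _ => ?_
    have hv : ((finProdFinEquiv (i, j.succ)).castSucc : Fin (k*(n+1)+1)).val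
        = (j.val + 1) + (n+1) * i.val := by
      simp [finProdFinEquiv]
    unfold blockVec
    rw [dif_pos (by simp only [Fin.coe_castSucc]; exact (finProdFinEquiv _).isLt), dif_neg]
    · congr 1
      · apply Fin.ext
        simp only [hv]
        rw [Nat.add_mul_div_left _ _ (Nat.succ_pos n), Nat.div_eq_of_lt (by omega), Nat.zero_add]
      · apply Fin.ext
        simp only [hv]
        rw [Nat.add_mul_mod_self_left, Nat.mod_eq_of_lt (by omega)]
        simp
    · simp only [hv]
      rw [Nat.add_mul_mod_self_left, Nat.mod_eq_of_lt (by omega)]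
      omega

theorem stmt_7 (q n m k : ℕ)
    (A : Fin k → Matrix (Fin n) (Fin m) (ZMod q))
    (s x : Fin k → (Fin n → ZMod q))
    (e e' : Fin k → (Fin m → ZMod q))
    (b : Fin k → ZMod q)
    (y : Fin k → (Fin m → ZMod q))
    (hy : ∀ i, y i = x i ᵥ* A i + e' i + b i • (s i ᵥ* A i))
    (M : Matrix (Fin (k * (n + 1) + 1)) (Fin m) (ZMod q))
    (hM : M = blockMat (fun i => s i ᵥ* A i + e i) A (∑ i, y i))
    (sk : Fin (k * (n + 1) + 1) → ZMod q)
    (hsk : sk = blockVec b x (-1))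
    (R : Matrix (Fin m) (Fin m) (ZMod q))
    (e'' : Fin m → ZMod q)
    (E : Matrix (Fin (k * (n + 1) + 1)) (Fin m) (ZMod q))
    (hE : E = Matrix.of fun idx j => if idx.val = k * (n + 1) then e'' j else 0)
    (G : Matrix (Fin (k * (n + 1) + 1)) (Fin m) (ZMod q))
    (μ τ : ZMod q)
    (ct : Matrix (Fin (k * (n + 1) + 1)) (Fin m) (ZMod q))
    (hct : ct = M * R + E + μ • G)
    (v : Fin (k * (n + 1) + 1) → ZMod q)
    (hv : v = fun idx => if idx.val = k * (n + 1) then τ else 0)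
    (w : Fin m → ZMod q)
    (hw : G *ᵥ w = v) :
    sk ᵥ* M = ∑ i, (b i • e i - e' i) ∧
    (-sk) ⬝ᵥ (ct *ᵥ w) =
      (∑ i, (e' i - b i • e i)) ⬝ᵥ (R *ᵥ w) + e'' ⬝ᵥ w + μ * τ := by

  have hskl : sk (Fin.last (k * (n + 1))) = -1 := by
    rw [hsk, blockVec_last]
  have ha : sk ᵥ* M = ∑ i, (b i • e i - e' i) := by
    funext j
    have : (sk ᵥ* M) j = ∑ idx, sk idx * M idx j := rfl
    rw [this]
    simp only [hsk, hM, blockMat, Matrix.of_apply, blockVec_mul, sum_blockVec]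
    simp only [Finset.sum_apply, Pi.sub_apply, Pi.smul_apply, smul_eq_mul, hy,
      Pi.add_apply, Matrix.vecMul, dotProduct, neg_one_mul,
      ← sub_eq_add_neg, ← Finset.sum_sub_distrib]
    exact Finset.sum_congr rfl fun i _ => by ring
  refine ⟨ha, ?_⟩
  have hsum : (-sk) ᵥ* M = ∑ i, (e' i - b i • e i) := by
    rw [Matrix.neg_vecMul, ha, ← Finset.sum_neg_distrib]
    exact Finset.sum_congr rfl fun i _ => neg_sub _ _
  rw [hct, Matrix.add_mulVec, Matrix.add_mulVec, Matrix.smul_mulVec, hw,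
    dotProduct_add, dotProduct_add]
  congr 1
  · congr 1
    · rw [← Matrix.mulVec_mulVec, Matrix.dotProduct_mulVec, hsum]
    · have hEw : E *ᵥ w = fun idx =>
          if idx = Fin.last (k * (n + 1)) then e'' ⬝ᵥ w else 0 := by
        funext idx
        by_cases h : idx = Fin.last (k * (n + 1))
        · simp [hE, h, Matrix.mulVec, dotProduct, Fin.val_last]
        · have h' : idx.val ≠ k * (n + 1) := by
            intro hc; exact h (Fin.ext hc)
          simp [hE, h, h', Matrix.mulVec, dotProduct]
      rw [hEw]
      simp [dotProduct, mul_ite, Finset.sum_ite_eq', hskl]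
  · have hvτ : v = fun idx =>
        if idx = Fin.last (k * (n + 1)) then τ else 0 := by
      funext idx
      by_cases h : idx = Fin.last (k * (n + 1))
      · simp [hv, h, Fin.val_last]
      · have h' : idx.val ≠ k * (n + 1) := fun hc => h (Fin.ext hc)
        simp [hv, h, h']
    rw [hvτ, dotProduct_smul]
    simp [dotProduct, mul_ite, Finset.sum_ite_eq', hskl, mul_comm]
end

section
/- Let q, n, m be natural numbers and work over ZMod q. Let A : Matrix (Fin n) (Fin m) (ZMod q), let s, x₀ : Fin n → ZMod q, let e, e' : Fin m → ZMod q, let r : Fin m → ZMod q, let e'', μ, c : ZMod q, and set x₁ := s − x₀, k := s ᵥ* A + e, y := x₀ ᵥ* A + e'. Define the ciphertext components ct₁ := A *ᵥ r (a vector in (ZMod q)ⁿ), ct₂ := k ⬝ᵥ r, and ct₃ := y ⬝ᵥ r + e'' + μ · c. Then both decryption equations hold: (a) ct₃ − x₀ ⬝ᵥ ct₁ = e' ⬝ᵥ r + e'' + μ · c, and (b) ct₃ − ct₂ + x₁ ⬝ᵥ ct₁ = (e' − e) ⬝ᵥ r + e'' + μ · c. -/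
open Matrix

theorem stmt_8 (q n m : ℕ)
    (A : Matrix (Fin n) (Fin m) (ZMod q))
    (s x₀ : Fin n → ZMod q)
    (e e' : Fin m → ZMod q)
    (r : Fin m → ZMod q)
    (e'' μ c : ZMod q)
    (x₁ : Fin n → ZMod q) (hx₁ : x₁ = s - x₀)
    (k : Fin m → ZMod q) (hk : k = s ᵥ* A + e)
    (y : Fin m → ZMod q) (hy : y = x₀ ᵥ* A + e')
    (ct₁ : Fin n → ZMod q) (hct₁ : ct₁ = A *ᵥ r)
    (ct₂ : ZMod q) (hct₂ : ct₂ = k ⬝ᵥ r)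
    (ct₃ : ZMod q) (hct₃ : ct₃ = y ⬝ᵥ r + e'' + μ * c) :
    ct₃ - x₀ ⬝ᵥ ct₁ = e' ⬝ᵥ r + e'' + μ * c ∧
    ct₃ - ct₂ + x₁ ⬝ᵥ ct₁ = (e' - e) ⬝ᵥ r + e'' + μ * c := by
  subst hx₁ hk hy hct₁ hct₂ hct₃
  constructor <;>
  simp [add_dotProduct, sub_dotProduct, dotProduct_mulVec, sub_vecMul] <;> ring
end

section
/- Let q be an odd natural number with q ≥ 3, let μ ∈ {0, 1} ⊆ ℤ, and let v ∈ ℤ satisfy 4·|v| + 2 ≤ q. Let z : ZMod q be the reduction of the integer μ·((q − 1)/2) + v. Define decode(z) := 0 if 4·z.val < q or 4·z.val > 3·q, and decode(z) := 1 otherwise (where z.val ∈ {0, …, q−1} is the canonical representative). Then decode(z) = μ. -/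
theorem stmt_9 (q : ℕ) (hq3 : 3 ≤ q) (hqodd : Odd q)
    (μ : ℤ) (hμ : μ = 0 ∨ μ = 1)
    (v : ℤ) (hv : 4 * |v| + 2 ≤ (q : ℤ))
    (z : ZMod q)
    (hz : z = ((μ * (((q - 1) / 2 : ℕ) : ℤ) + v : ℤ) : ZMod q)) :
    (if 4 * z.val < q ∨ 3 * q < 4 * z.val then (0 : ℤ) else 1) = μ := by
  obtain ⟨k, hk⟩ := hqodd
  have hc : ((q - 1) / 2 : ℕ) = k := by omega
  have : NeZero q := ⟨by omega⟩
  have hb : -(q : ℤ) + 2 ≤ 4 * v ∧ 4 * v + 2 ≤ q := by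
    rcases abs_cases v with ⟨h1, h2⟩ | ⟨h1, h2⟩ <;> rw [h1] at hv <;> omega
  have hval : (z.val : ℤ) = (μ * (k : ℤ) + v) % q := by
    rw [hz, hc, ZMod.val_intCast]
  rcases hμ with rfl | rfl
  · have h1 : v % (q : ℤ) = v ∨ v % (q : ℤ) = v + q := by
      rcases le_or_gt 0 v with h | h
      · left; exact Int.emod_eq_of_lt h (by omega)
      · right
        have : (v + q) % (q : ℤ) = v % q := by
          simpa using Int.add_mul_emod_self_left (a := v) (b := (q : ℤ)) (c := 1)
        rw [← this]
        exact Int.emod_eq_of_lt (by omega) (by omega)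
      -- done
    simp only [zero_mul, zero_add] at hval
    rw [if_pos]
    omega
  · have h1 : (1 * (k : ℤ) + v) % q = k + v := by
      rw [one_mul]
      exact Int.emod_eq_of_lt (by omega) (by omega)
    rw [h1] at hval
    rw [if_neg]
    omega
end

section
/- Let q be a natural number with q ≥ 1, and let n, m be natural numbers. Fix s : Fin n → ZMod q, e : Fin m → ZMod q, and an index j : Fin n. For c : Fin m → ZMod q let C(c) : Matrix (Fin n) (Fin m) (ZMod q) be the matrix whose j-th row equals c and whose other rows are zero. Then the probability mass function obtained by sampling A uniformly from Matrix (Fin n) (Fin m) (ZMod q) and c uniformly from Fin m → ZMod q and outputting the pair (A + C(c), s ᵥ* A + e + (s j) • c) is equal to the probability mass function obtained by sampling A' uniformly from Matrix (Fin n) (Fin m) (ZMod q) and outputting (A', s ᵥ* A' + e). -/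
open Matrix

theorem stmt_10 (q n m : ℕ) (hq : 1 ≤ q) [NeZero q]
    (s : Fin n → ZMod q) (e : Fin m → ZMod q) (j : Fin n) :
    ((PMF.uniformOfFintype (Matrix (Fin n) (Fin m) (ZMod q))).bind fun A =>
      (PMF.uniformOfFintype (Fin m → ZMod q)).map fun c =>
        (A + Matrix.of (fun i l => if i = j then c l else 0),
          s ᵥ* A + e + (s j) • c))
    =
    (PMF.uniformOfFintype (Matrix (Fin n) (Fin m) (ZMod q))).map
      (fun A' => (A', s ᵥ* A' + e)) := by
  set C : (Fin m → ZMod q) → Matrix (Fin n) (Fin m) (ZMod q) :=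
    fun c => Matrix.of (fun i l => if i = j then c l else 0) with hC
  have hvec : ∀ (c : Fin m → ZMod q), s ᵥ* (C c) = (s j) • c := by
    intro c
    funext l
    simp [hC, vecMul, dotProduct, mul_ite, Finset.sum_ite_eq']
  have key : ∀ c : Fin m → ZMod q,
      (PMF.uniformOfFintype (Matrix (Fin n) (Fin m) (ZMod q))).map
        (fun A => A + C c) = PMF.uniformOfFintype _ := by
    intro c
    ext x
    rw [PMF.map_apply, tsum_eq_single (x - C c)]
    · simp
    · intro b hb
      rw [if_neg]
      intro h
      exact hb (by simp [h])
  show ((PMF.uniformOfFintype (Matrix (Fin n) (Fin m) (ZMod q))).bind fun A =>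
      (PMF.uniformOfFintype (Fin m → ZMod q)).bind fun c =>
        PMF.pure (A + C c, s ᵥ* A + e + (s j) • c)) = _
  rw [PMF.bind_comm]
  have step : ∀ c : Fin m → ZMod q,
      ((PMF.uniformOfFintype (Matrix (Fin n) (Fin m) (ZMod q))).bind fun A =>
        PMF.pure (A + C c, s ᵥ* A + e + (s j) • c))
      = (PMF.uniformOfFintype (Matrix (Fin n) (Fin m) (ZMod q))).bind
          fun A' => PMF.pure (A', s ᵥ* A' + e) := by
    intro c
    have hfun : (fun A : Matrix (Fin n) (Fin m) (ZMod q) =>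
        PMF.pure (A + C c, s ᵥ* A + e + (s j) • c))
        = (fun A' => PMF.pure (A', s ᵥ* A' + e)) ∘ (fun A => A + C c) := by
      funext A
      simp only [Function.comp]
      congr 1
      have : s ᵥ* (A + C c) = s ᵥ* A + (s j) • c := by
        rw [Matrix.vecMul_add, hvec]
      rw [this]
      ring_nf
    rw [hfun, ← PMF.bind_map, key c]
  simp_rw [step]
  rw [PMF.bind_const]
  rfl
end

section
/- Let q be a prime, and let n, m be natural numbers. Fix s : Fin n → ZMod q, e : Fin m → ZMod q, an index j : Fin n, and a scalar g : ZMod q with g ≠ s j. For c : Fin m → ZMod q let C(c) : Matrix (Fin n) (Fin m) (ZMod q) be the matrix whose j-th row equals c and whose other rows are zero. Then the probability mass function obtained by sampling A uniformly from Matrix (Fin n) (Fin m) (ZMod q) and c uniformly from Fin m → ZMod q and outputting the pair (A + C(c), s ᵥ* A + e + g • c) is equal to the uniform probability mass function on (Matrix (Fin n) (Fin m) (ZMod q)) × (Fin m → ZMod q), i.e. to sampling A' and u' independently and uniformly and outputting (A', u'). -/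
open Matrix

theorem stmt_11 (q n m : ℕ) (hq : Nat.Prime q) [NeZero q]
    (s : Fin n → ZMod q) (e : Fin m → ZMod q) (j : Fin n)
    (g : ZMod q) (hg : g ≠ s j) :
    ((PMF.uniformOfFintype (Matrix (Fin n) (Fin m) (ZMod q))).bind fun A =>
      (PMF.uniformOfFintype (Fin m → ZMod q)).map fun c =>
        (A + Matrix.of (fun i l => if i = j then c l else 0),
          s ᵥ* A + e + g • c))
    =
    PMF.uniformOfFintype ((Matrix (Fin n) (Fin m) (ZMod q)) × (Fin m → ZMod q)) := by
  haveI := Fact.mk hq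
  set C : (Fin m → ZMod q) → Matrix (Fin n) (Fin m) (ZMod q) :=
    fun c => Matrix.of (fun i l => if i = j then c l else 0) with hCdef
  have hC : ∀ c : Fin m → ZMod q, s ᵥ* C c = s j • c := by
    intro c
    funext l
    simp only [Matrix.vecMul, dotProduct, hCdef, Matrix.of_apply, Pi.smul_apply,
      smul_eq_mul]
    rw [Finset.sum_eq_single j]
    · simp
    · intro b _ hb; simp [hb]
    · simp
  have hd : g - s j ≠ 0 := sub_ne_zero.mpr hg
  set F : (Matrix (Fin n) (Fin m) (ZMod q)) × (Fin m → ZMod q) →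
      (Matrix (Fin n) (Fin m) (ZMod q)) × (Fin m → ZMod q) :=
    fun p => (p.1 + C p.2, s ᵥ* p.1 + e + g • p.2) with hF
  set G : (Matrix (Fin n) (Fin m) (ZMod q)) × (Fin m → ZMod q) →
      (Matrix (Fin n) (Fin m) (ZMod q)) × (Fin m → ZMod q) :=
    fun p => (p.1 - C ((g - s j)⁻¹ • (p.2 - s ᵥ* p.1 - e)),
      (g - s j)⁻¹ • (p.2 - s ᵥ* p.1 - e)) with hG
  have hFG : ∀ p, F (G p) = p := by
    rintro ⟨B, u⟩
    set x : Fin m → ZMod q := (g - s j)⁻¹ • (u - s ᵥ* B - e) with hx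
    have hx2 : (g - s j) • x = u - s ᵥ* B - e := smul_inv_smul₀ hd _
    simp only [hF, hG]
    refine Prod.ext (by simp) ?_
    show s ᵥ* (B - C x) + e + g • x = u
    rw [Matrix.vecMul_sub, hC]
    calc s ᵥ* B - s j • x + e + g • x
        = s ᵥ* B + e + (g - s j) • x := by rw [sub_smul]; abel
      _ = u := by rw [hx2]; abel
  have hGF : ∀ p, G (F p) = p := by
    rintro ⟨A, c⟩
    simp only [hF, hG]
    have key : (s ᵥ* A + e + g • c) - s ᵥ* (A + C c) - e = (g - s j) • c := by
      rw [Matrix.vecMul_add, hC, sub_smul]; abel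
    have hc : (g - s j)⁻¹ • ((s ᵥ* A + e + g • c) - s ᵥ* (A + C c) - e) = c := by
      rw [key, inv_smul_smul₀ hd]
    refine Prod.ext ?_ hc
    show (A + C c) - C ((g - s j)⁻¹ • ((s ᵥ* A + e + g • c) - s ᵥ* (A + C c) - e)) = A
    rw [hc]; abel
  apply PMF.ext
  rintro x
  rw [PMF.bind_apply]
  simp only [PMF.map_apply, PMF.uniformOfFintype_apply]
  show (∑' A : Matrix (Fin n) (Fin m) (ZMod q),
      (Fintype.card (Matrix (Fin n) (Fin m) (ZMod q)) : ENNReal)⁻¹ *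
      ∑' c : Fin m → ZMod q,
        (if x = F (A, c) then (Fintype.card (Fin m → ZMod q) : ENNReal)⁻¹ else 0))
    = (Fintype.card ((Matrix (Fin n) (Fin m) (ZMod q)) × (Fin m → ZMod q)) : ENNReal)⁻¹
  rw [ENNReal.tsum_mul_left]
  have h1 : ∑' (A : Matrix (Fin n) (Fin m) (ZMod q)) (c : Fin m → ZMod q),
      (if x = F (A, c) then (Fintype.card (Fin m → ZMod q) : ENNReal)⁻¹ else 0)
      = ∑' (p : (Matrix (Fin n) (Fin m) (ZMod q)) × (Fin m → ZMod q)),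
      (if x = F p then (Fintype.card (Fin m → ZMod q) : ENNReal)⁻¹ else 0) :=
    (ENNReal.tsum_prod' (f := fun p => if x = F p then (Fintype.card (Fin m → ZMod q) : ENNReal)⁻¹ else 0)).symm
  rw [h1, tsum_eq_single (G x) (fun p hp => by
    rw [if_neg]
    intro hxp
    exact hp (by rw [hxp, hGF]))]
  rw [hFG x, if_pos rfl, Fintype.card_prod, Nat.cast_mul, ENNReal.mul_inv] <;>
    simp [Fintype.card_ne_zero]
end
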